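/- Let S be a set of pmfs such that q = ⋀S exists. Then for any pmf q̃ satisfying q̃ ⪯ p for every p ∈ S, we have q̃ ⪯ q; i.e., ⋀S is the greatest lower bound of S with respect to majorization. -/

import Mathlib

open scoped ENNReal Classical
open Filter

namespace MEC

/-- A probability mass function on `α`: (nonnegative) masses summing to `1`. -/
def IsPMF {α : Type*} (p : α → ℝ≥0∞) : Prop := ∑' x, p x = 1

/-- `p` is an aggregation of `q`, written `q ⊑ p`: there is a map `g` sending the support of
`q` into the support of `p` such that `p` is the pushforward of `q` under `g`. -/
def Agg {α β : Type*} (q : α → ℝ≥0∞) (p : β → ℝ≥0∞) : Prop :=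
  ∃ g : α → β, (∀ x, q x ≠ 0 → p (g x) ≠ 0) ∧
    ∀ y, p y = ∑' x, if g x = y then q x else 0

/-- Sum of the `k` largest masses of `p`, i.e. `max_{A, |A| ≤ k} p(A)`. -/
noncomputable def topk {α : Type*} (p : α → ℝ≥0∞) (k : ℕ) : ℝ≥0∞ :=
  ⨆ (A : Finset α) (_ : A.card ≤ k), ∑ x ∈ A, p x

/-- `q` is majorized by `p`, written `q ⪯ p`: for every `k`, the sum of the `k` largest
masses of `q` is at most the sum of the `k` largest masses of `p`. -/
def Majorized {α β : Type*} (q : α → ℝ≥0∞) (p : β → ℝ≥0∞) : Prop :=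
  ∀ k : ℕ, topk q k ≤ topk p k

/-- Product pmf `(q × r)(x,z) = q(x) · r(z)`. -/
noncomputable def prodFun {α β : Type*} (q : α → ℝ≥0∞) (r : β → ℝ≥0∞) : α × β → ℝ≥0∞ :=
  fun z => q z.1 * r z.2

/-- `Geom_{1/2}` on `ℕ+ = {1,2,3,...}`, with mass `2^{-x}` at `x`. -/
noncomputable def geomHalf : ℕ+ → ℝ≥0∞ := fun x => 2⁻¹ ^ (x : ℕ)

/-- Capped geometric distribution `CGeom_{1/2,k}` on `{1,...,k} ⊆ ℕ+`. -/
noncomputable def cgeomHalf (k : ℕ) : ℕ+ → ℝ≥0∞ := fun x =>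
  if (x : ℕ) < k then 2⁻¹ ^ (x : ℕ) else if (x : ℕ) = k then 2⁻¹ ^ (k - 1) else 0

/-- `inf_{p ∈ S} max_{A ⊆ supp(p), |A| ≤ k} p(A)`. -/
noncomputable def infTopk {α : Type*} (S : Set (α → ℝ≥0∞)) (k : ℕ) : ℝ≥0∞ :=
  ⨅ p ∈ S, topk p k

/-- The greatest lower bound `⋀S` of `S` with respect to majorization, as a pmf on
`ℕ+ = {1,2,...}`, with `(⋀S)(k) = inf_{p∈S} max_{|A|≤k} p(A) − inf_{p∈S} max_{|A|≤k−1} p(A)`. -/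
noncomputable def glb {α : Type*} (S : Set (α → ℝ≥0∞)) : ℕ+ → ℝ≥0∞ :=
  fun k => infTopk S (k : ℕ) - infTopk S ((k : ℕ) - 1)

/-- Condition for the existence of `⋀S`:
`lim_{k→∞} inf_{p∈S} max_{A⊆supp(p), |A|≤k} p(A) = 1`. -/
def GlbExists {α : Type*} (S : Set (α → ℝ≥0∞)) : Prop :=
  Tendsto (fun k => infTopk S k) atTop (nhds 1)

/-- Base-2 logarithm on `ℝ≥0∞` (intended for arguments in `[1,∞]`). -/
noncomputable def log2 (x : ℝ≥0∞) : ℝ≥0∞ :=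
  if x = ∞ then ∞ else ENNReal.ofReal (Real.logb 2 x.toReal)

/-- Shannon entropy (base 2): `H(p) = Σ_x p(x) log₂ (1/p(x))`. -/
noncomputable def shannon {α : Type*} (p : α → ℝ≥0∞) : ℝ≥0∞ :=
  ∑' x, p x * log2 (p x)⁻¹

/-- Rényi entropy of order `a ∈ [0,∞]` (base 2):
`H_a(p) = (1/(1−a)) log₂ Σ_{x ∈ supp(p)} p(x)^a` for `a ∉ {1,∞}` (for `a > 1` this is
written in the equivalent form `(1/(a−1)) log₂ (Σ_{x ∈ supp(p)} p(x)^a)⁻¹` so that it is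
nonnegative), Shannon entropy for `a = 1`, and `−log₂ max_x p(x)` for `a = ∞`. -/
noncomputable def renyi {α : Type*} (p : α → ℝ≥0∞) (a : ℝ≥0∞) : ℝ≥0∞ :=
  if a = 1 then shannon p
  else if a = ∞ then log2 (⨆ x, p x)⁻¹
  else if a < 1 then log2 (∑' x, if p x = 0 then 0 else p x ^ a.toReal) * (1 - a)⁻¹
  else log2 (∑' x, if p x = 0 then 0 else p x ^ a.toReal)⁻¹ * (a - 1)⁻¹

/-- `q ∈ Γ̃(S)`: `q` (a pmf over `ℕ`, without loss of generality) is an underlying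
distribution of a coupling of `S`, i.e. `q ⊑ p` for every `p ∈ S`. -/
def UnderlyingCoupling {α : Type*} (S : Set (α → ℝ≥0∞)) (q : ℕ → ℝ≥0∞) : Prop :=
  IsPMF q ∧ ∀ p ∈ S, Agg q p

/-- `H*_a(S) = inf_{q ∈ Γ̃(S)} H_a(q)`, the minimum Rényi entropy of couplings of `S`. -/
noncomputable def minRenyi {α : Type*} (S : Set (α → ℝ≥0∞)) (a : ℝ≥0∞) : ℝ≥0∞ :=
  ⨅ (q : ℕ → ℝ≥0∞) (_ : UnderlyingCoupling S q), renyi q a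

section

variable {α : Type*}

theorem topk_mono (p : α → ℝ≥0∞) : Monotone (topk p) := fun _ _ hmn =>
  iSup₂_le fun A hA => le_iSup₂_of_le A (hA.trans hmn) le_rfl

theorem topk_zero (p : α → ℝ≥0∞) : topk p 0 = 0 := by
  simp [topk]

theorem infTopk_mono (S : Set (α → ℝ≥0∞)) : Monotone (infTopk S) := fun _ _ hmn =>
  iInf₂_mono fun p _ => topk_mono p hmn

theorem infTopk_zero {S : Set (α → ℝ≥0∞)} (hS : S.Nonempty) : infTopk S 0 = 0 := by
  obtain ⟨p, hp⟩ := hS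
  exact nonpos_iff_eq_zero.mp ((iInf₂_le p hp).trans_eq (topk_zero p))

theorem GlbExists.nonempty {S : Set (α → ℝ≥0∞)} (hex : GlbExists S) : S.Nonempty := by
  -- over `∅` every `infTopk` is `⊤`, which does not tend to `1`
  rw [Set.nonempty_iff_ne_empty]
  rintro rfl
  simp [GlbExists, infTopk] at hex

theorem topk_le_infTopk_of_forall_majorized {β : Type*} {q : β → ℝ≥0∞} {S : Set (α → ℝ≥0∞)}
    (h : ∀ p ∈ S, Majorized q p) (k : ℕ) : topk q k ≤ infTopk S k :=
  le_iInf₂ fun p hp => h p hp k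

theorem glb_succPNat (S : Set (α → ℝ≥0∞)) (i : ℕ) :
    glb S i.succPNat = infTopk S (i + 1) - infTopk S i := rfl

theorem sum_range_glb_succPNat {S : Set (α → ℝ≥0∞)} (hS : S.Nonempty) (n : ℕ) :
    ∑ i ∈ Finset.range n, glb S i.succPNat = infTopk S n := by
  induction n with
  | zero => exact (infTopk_zero hS).symm
  | succ n ih =>
    rw [Finset.sum_range_succ, ih, glb_succPNat,
      add_tsub_cancel_of_le (infTopk_mono S n.le_succ)]

theorem infTopk_le_topk_glb {S : Set (α → ℝ≥0∞)} (hS : S.Nonempty) (k : ℕ) :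
    infTopk S k ≤ topk (glb S) k := by
  refine le_iSup₂_of_le ((Finset.range k).map ⟨Nat.succPNat, Nat.succPNat_injective⟩)
    (by simp) ?_
  rw [Finset.sum_map]
  exact (sum_range_glb_succPNat hS k).ge

end

theorem glb_is_greatest_lower_bound_general {α β : Type*}
    (S : Set (α → ℝ≥0∞)) (hex : GlbExists S)
    (qt : β → ℝ≥0∞) (h : ∀ p ∈ S, Majorized qt p) :
    Majorized qt (glb S) := fun k =>
  (topk_le_infTopk_of_forall_majorized h k).trans (infTopk_le_topk_glb hex.nonempty k)

/-- Proposition 3(3): `⋀S` is the greatest lower bound of `S` with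
respect to majorization: any pmf `q̃` with `q̃ ⪯ p` for all `p ∈ S` satisfies `q̃ ⪯ ⋀S`. -/
theorem glb_is_greatest_lower_bound {α β : Type*} [Countable α] [Countable β]
    (S : Set (α → ℝ≥0∞)) (hS : ∀ p ∈ S, IsPMF p) (hex : GlbExists S)
    (qt : β → ℝ≥0∞) (hqt : IsPMF qt) (h : ∀ p ∈ S, Majorized qt p) :
    Majorized qt (glb S) :=
  glb_is_greatest_lower_bound_general S hex qt h

end MEC
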